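/- Let 0 < ε < 1/2 and set a = (6(1 − 2ε))^{1/3}. There exists an integer K₀ such that for every integer K ≥ K₀ there exists N such that for all integers n ≥ N, setting b = ⌊a·n^{1/3}/K⌋, the number of Wilf partitions of n satisfies f(n) ≥ (b!)^K. -/

import Mathlib

/-- A Wilf partition: the multiplicities of distinct parts are all different. -/
def IsWilf {n : ℕ} (P : n.Partition) : Prop :=
  ∀ p ∈ P.parts, ∀ q ∈ P.parts,
    Multiset.count p P.parts = Multiset.count q P.parts → p = q

/-- `wilfCount n` is the number of Wilf partitions of `n`. -/
noncomputable def wilfCount (n : ℕ) : ℕ :=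
  Nat.card {P : n.Partition // IsWilf P}

/-!
Take the `Kb` parts `1, …, Kb` in `K` consecutive blocks of `b`, give the parts of the `k`-th
block the multiplicities `(K - 1 - k)b + 2, …, (K - k)b + 1` in any of the `b!` orders, and add a
single part `r > Kb` making the total `n`. All multiplicities are distinct, so each of the
`(b!)^K` choices gives a different Wilf partition, as long as the parts other than `r` weigh at
most `n - Kb - 1`. That weight is at most `K(K+1)(K+2)b³/6 + K(K+1)b²/2`; with `bK ≤ a n^{1/3}`
its leading term is `(1 + O(1/K))(1 - 2ε)n`, which is below `(1 - ε)n` once `K ≥ 5/ε`, and the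
remaining terms are `O(n^{2/3}) ≤ εn` for large `n`.
-/

open Finset Function Filter

section Construction

variable {ι : Type*} [Fintype ι] {part : ι → ℕ}

def partsWithMult (part m : ι → ℕ) (r : ℕ) : Multiset ℕ :=
  ∑ i, Multiset.replicate (m i) (part i) + {r}

variable {m : ι → ℕ} {r : ℕ}

lemma count_partsWithMult_part (hpart : Injective part) (hr : ∀ i, part i ≠ r) (i : ι) :
    (partsWithMult part m r).count (part i) = m i := by
  rw [partsWithMult, Multiset.count_add, Multiset.count_sum', Finset.sum_eq_single i,
    Multiset.count_replicate_self, Multiset.count_singleton, if_neg (hr i), add_zero]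
  · intro j _ hji
    rw [Multiset.count_replicate, if_neg (hpart.ne hji)]
  · simp

lemma count_partsWithMult_self (hr : ∀ i, part i ≠ r) :
    (partsWithMult part m r).count r = 1 := by
  rw [partsWithMult, Multiset.count_add, Multiset.count_sum', Finset.sum_eq_zero,
    Multiset.count_singleton_self, zero_add]
  intro i _
  rw [Multiset.count_replicate, if_neg (hr i)]

lemma mem_partsWithMult {q : ℕ} (hq : q ∈ partsWithMult part m r) :
    (∃ i, part i = q) ∨ q = r := by
  rcases Multiset.mem_add.1 hq with hq | hq
  · obtain ⟨i, -, hi⟩ := Multiset.mem_sum.1 hq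
    exact Or.inl ⟨i, (Multiset.eq_of_mem_replicate hi).symm⟩
  · exact Or.inr (Multiset.mem_singleton.1 hq)

lemma sum_partsWithMult : (partsWithMult part m r).sum = ∑ i, part i * m i + r := by
  simp only [partsWithMult, Multiset.sum_add, Multiset.sum_sum, Multiset.sum_replicate,
    smul_eq_mul, Multiset.sum_singleton, mul_comm]

variable {B n : ℕ} (hpos : ∀ i, 0 < part i) (hB : ∀ i, part i ≤ B)

/-- The part `n - ∑ i, part i * m i` exceeds `B`, hence differs from every `part i`. -/
def partitionWithMult (m : ι → ℕ) (hn : ∑ i, part i * m i + B < n) : n.Partition where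
  parts := partsWithMult part m (n - ∑ i, part i * m i)
  parts_pos hq := by
    rcases mem_partsWithMult hq with ⟨i, rfl⟩ | rfl
    exacts [hpos i, by omega]
  parts_sum := by rw [sum_partsWithMult]; omega

include hB in
lemma count_partitionWithMult (hpart : Injective part) (hn : ∑ i, part i * m i + B < n) (i : ι) :
    (partitionWithMult hpos m hn).parts.count (part i) = m i :=
  count_partsWithMult_part hpart (fun j => by have := hB j; omega) i

include hB in
lemma isWilf_partitionWithMult (hpart : Injective part) (hm : Injective m) (htwo : ∀ i, 2 ≤ m i)
    (hn : ∑ i, part i * m i + B < n) : IsWilf (partitionWithMult hpos m hn) := by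
  have hr : ∀ i, part i ≠ n - ∑ i, part i * m i := fun j => by have := hB j; omega
  have hcount := count_partitionWithMult hpos hB hpart hn
  have hcount_r := count_partsWithMult_self (m := m) hr
  intro p hp q hq hpq
  rcases mem_partsWithMult hp with ⟨i, rfl⟩ | rfl <;>
    rcases mem_partsWithMult hq with ⟨j, rfl⟩ | rfl
  · rw [hcount, hcount] at hpq
    rw [hm hpq]
  · have := (hcount i).symm.trans (hpq.trans hcount_r)
    have := htwo i
    omega
  · have := (hcount j).symm.trans (hpq.symm.trans hcount_r)
    have := htwo j
    omega
  · rfl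

include hpos hB in
theorem card_le_wilfCount {α : Type*} (hpart : Injective part) (mult : α → ι → ℕ)
    (hmult : Injective mult) (hinj : ∀ s, Injective (mult s)) (htwo : ∀ s i, 2 ≤ mult s i)
    (hn : ∀ s, ∑ i, part i * mult s i + B < n) : Nat.card α ≤ wilfCount n := by
  refine Nat.card_le_card_of_injective
    (fun s => ⟨partitionWithMult hpos (mult s) (hn s),
      isWilf_partitionWithMult hpos hB hpart (hinj s) (htwo s) (hn s)⟩) fun s t hst => ?_
  refine hmult (funext fun i => ?_)
  rw [← count_partitionWithMult hpos hB hpart (hn s),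
    ← count_partitionWithMult hpos hB hpart (hn t)]
  exact congrArg (fun P : {P : n.Partition // IsWilf P} => P.1.parts.count (part i)) hst

end Construction

section Blocks

variable {K b : ℕ}

def blockPart (x : Fin K × Fin b) : ℕ := finProdFinEquiv x + 1

def blockMult (σ : Fin K → Equiv.Perm (Fin b)) (x : Fin K × Fin b) : ℕ :=
  finProdFinEquiv (Equiv.prodShear Fin.revPerm σ x) + 2

lemma blockPart_injective : Injective (blockPart (K := K) (b := b)) :=
  (add_left_injective 1).comp (Fin.val_injective.comp finProdFinEquiv.injective)

lemma blockPart_pos (x : Fin K × Fin b) : 0 < blockPart x := Nat.succ_pos _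

lemma blockPart_le (x : Fin K × Fin b) : blockPart x ≤ K * b := (finProdFinEquiv x).isLt

lemma blockMult_injective (σ : Fin K → Equiv.Perm (Fin b)) : Injective (blockMult σ) :=
  (add_left_injective 2).comp
    (Fin.val_injective.comp (finProdFinEquiv.injective.comp (Equiv.prodShear _ σ).injective))

lemma two_le_blockMult (σ : Fin K → Equiv.Perm (Fin b)) (x : Fin K × Fin b) :
    2 ≤ blockMult σ x := Nat.le_add_left _ _

lemma injective_blockMult : Injective (blockMult (K := K) (b := b)) := by
  intro σ τ h
  ext k j : 2
  have := congrArg (fun x => (finProdFinEquiv.symm x).2)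
    (Fin.val_injective (Nat.add_right_cancel (congrFun h (k, j))))
  simpa using this

lemma blockPart_mul_blockMult_le (σ : Fin K → Equiv.Perm (Fin b)) (k : Fin K) (j : Fin b) :
    blockPart (k, j) * blockMult σ (k, j) ≤ b * (k + 1) * (b * (K - k) + 1) := by
  have hj := j.isLt
  have hσ := (σ k j).isLt
  have hk := k.isLt
  apply Nat.mul_le_mul
  · simp only [blockPart, finProdFinEquiv_apply_val]
    nlinarith
  · simp only [blockMult, Equiv.prodShear_apply, finProdFinEquiv_apply_val, Fin.revPerm_apply,
      Fin.val_rev]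
    have : b * (K - (k + 1)) + b = b * (K - k) := by
      rw [← Nat.mul_succ]; congr 1; omega
    omega

lemma two_mul_sum_range_succ (K : ℕ) : 2 * ∑ k ∈ range K, (k + 1) = K * (K + 1) := by
  induction K with
  | zero => simp
  | succ K ih => rw [sum_range_succ, mul_add, ih]; ring

lemma six_mul_sum_range_succ_mul_sub (K : ℕ) :
    6 * ∑ k ∈ range K, (k + 1) * (K - k) = K * (K + 1) * (K + 2) := by
  induction K with
  | zero => simp
  | succ K ih =>
    have hstep : ∀ k ∈ range (K + 1), (k + 1) * (K + 1 - k) = (k + 1) * (K - k) + (k + 1) := by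
      intro k hk
      rw [mem_range] at hk
      rw [show K + 1 - k = K - k + 1 by omega, mul_add_one]
    rw [sum_congr rfl hstep, sum_add_distrib, sum_range_succ (fun k => (k + 1) * (K - k)),
      Nat.sub_self, mul_zero, add_zero]
    have h2 := two_mul_sum_range_succ (K + 1)
    linear_combination ih + 3 * h2

lemma six_mul_sum_blockPart_mul_blockMult_le (σ : Fin K → Equiv.Perm (Fin b)) :
    6 * ∑ x, blockPart x * blockMult σ x ≤
      K * (K + 1) * (K + 2) * b ^ 3 + 3 * (K * (K + 1)) * b ^ 2 :=
  calc 6 * ∑ x, blockPart x * blockMult σ x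
      ≤ 6 * ∑ k ∈ range K, b * (b * (k + 1) * (b * (K - k) + 1)) := by
        rw [Fintype.sum_prod_type, ← Fin.sum_univ_eq_sum_range]
        gcongr with k
        calc ∑ j, blockPart (k, j) * blockMult σ (k, j)
            ≤ ∑ _j : Fin b, b * (k + 1) * (b * (K - k) + 1) :=
              sum_le_sum fun j _ => blockPart_mul_blockMult_le σ k j
          _ = _ := by simp
    _ = (6 * ∑ k ∈ range K, (k + 1) * (K - k)) * b ^ 3
          + 3 * (2 * ∑ k ∈ range K, (k + 1)) * b ^ 2 := by
        simp only [mul_sum, sum_mul, ← sum_add_distrib]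
        exact sum_congr rfl fun k _ => by ring
    _ = _ := by rw [six_mul_sum_range_succ_mul_sub, two_mul_sum_range_succ]

theorem factorial_pow_le_wilfCount {n : ℕ}
    (h : K * (K + 1) * (K + 2) * b ^ 3 + 3 * (K * (K + 1)) * b ^ 2 + 6 * (K * b) + 6 ≤ 6 * n) :
    b.factorial ^ K ≤ wilfCount n := by
  have hcard : Nat.card (Fin K → Equiv.Perm (Fin b)) = b.factorial ^ K := by
    simp [Fintype.card_perm]
  rw [← hcard]
  refine card_le_wilfCount blockPart_pos blockPart_le blockPart_injective blockMult
    injective_blockMult blockMult_injective two_le_blockMult fun σ => ?_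
  have := six_mul_sum_blockPart_mul_blockMult_le σ
  omega

end Blocks

section Estimates

lemma cubic_term_le {ε K b n : ℝ} (hε2 : ε < 1 / 2) (hK : 1 ≤ K) (hεK : 5 ≤ ε * K)
    (hb : 0 ≤ b) (h : (b * K) ^ 3 ≤ 6 * (1 - 2 * ε) * n) :
    K * (K + 1) * (K + 2) * b ^ 3 ≤ 6 * (1 - ε) * n := by
  have hn : 0 ≤ n := by
    have := pow_nonneg (mul_nonneg hb (by linarith : 0 ≤ K)) 3
    by_contra! hneg
    nlinarith
  have hpoly : (K + 1) * (K + 2) * (1 - 2 * ε) ≤ (1 - ε) * K ^ 2 := by nlinarith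
  have hK2 : 0 < K ^ 2 := by positivity
  refine le_of_mul_le_mul_left ?_ hK2
  calc K ^ 2 * (K * (K + 1) * (K + 2) * b ^ 3) = (K + 1) * (K + 2) * (b * K) ^ 3 := by ring
    _ ≤ (K + 1) * (K + 2) * (6 * (1 - 2 * ε) * n) := by gcongr
    _ = 6 * ((K + 1) * (K + 2) * (1 - 2 * ε)) * n := by ring
    _ ≤ 6 * ((1 - ε) * K ^ 2) * n := by gcongr
    _ = K ^ 2 * (6 * (1 - ε) * n) := by ring

lemma lower_terms_le {K b y : ℝ} (hK : 1 ≤ K) (hb : 0 ≤ b) (hy : b * K ≤ y) :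
    3 * (K * (K + 1)) * b ^ 2 + 6 * (K * b) + 6 ≤ 6 * (y ^ 2 + y + 1) := by
  have hbK : 0 ≤ b * K := by positivity
  have : (b * K) ^ 2 ≤ y ^ 2 := pow_le_pow_left₀ hbK hy 2
  nlinarith

lemma eventually_sq_add_le_mul_cube (a : ℝ) {ε : ℝ} (hε : 0 < ε) :
    ∀ᶠ x : ℝ in atTop, (a * x) ^ 2 + a * x + 1 ≤ ε * x ^ 3 := by
  filter_upwards [eventually_ge_atTop 1, eventually_ge_atTop ((a ^ 2 + |a| + 1) / ε)]
    with x hx1 hxε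
  have hax : a * x ≤ |a| * x ^ 2 :=
    calc a * x ≤ |a| * x := by gcongr; exact le_abs_self a
      _ ≤ |a| * x ^ 2 := by gcongr; nlinarith
  calc (a * x) ^ 2 + a * x + 1 ≤ (a ^ 2 + |a| + 1) * x ^ 2 := by nlinarith
    _ ≤ ε * x * x ^ 2 := by gcongr; rwa [div_le_iff₀ hε, mul_comm] at hxε
    _ = ε * x ^ 3 := by ring

lemma rpow_one_div_three_pow {x : ℝ} (hx : 0 ≤ x) : (x ^ ((1 : ℝ) / 3)) ^ 3 = x := by
  rw [one_div, ← Nat.cast_ofNat, Real.rpow_inv_natCast_pow hx three_ne_zero]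

end Estimates

theorem stmt14 (ε : ℝ) (hε0 : 0 < ε) (hε2 : ε < 1 / 2)
    (a : ℝ) (ha : a = (6 * (1 - 2 * ε)) ^ ((1 : ℝ) / 3)) :
    ∃ K₀ : ℕ, ∀ K : ℕ, K₀ ≤ K → ∃ N : ℕ, ∀ n : ℕ, N ≤ n →
      ∀ b : ℕ, b = ⌊a * (n : ℝ) ^ ((1 : ℝ) / 3) / K⌋₊ →
        (b.factorial) ^ K ≤ wilfCount n := by
  have ha0 : 0 ≤ a := ha ▸ Real.rpow_nonneg (by linarith) _
  have ha3 : a ^ 3 = 6 * (1 - 2 * ε) := ha ▸ rpow_one_div_three_pow (by linarith)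
  refine ⟨⌈5 / ε⌉₊, fun K hK => ?_⟩
  have hK1 : (1 : ℝ) ≤ K := by exact_mod_cast (Nat.ceil_pos.2 (by positivity)).trans_le hK
  have hεK : 5 ≤ ε * K := (div_le_iff₀' hε0).1 ((Nat.le_ceil _).trans (by exact_mod_cast hK))
  have hlarge := (tendsto_rpow_atTop (by norm_num : (0 : ℝ) < 1 / 3)).comp
    tendsto_natCast_atTop_atTop |>.eventually (eventually_sq_add_le_mul_cube a hε0)
  obtain ⟨N, hN⟩ := eventually_atTop.1 hlarge
  refine ⟨N, fun n hn b hb => factorial_pow_le_wilfCount ?_⟩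
  set x := (n : ℝ) ^ ((1 : ℝ) / 3)
  have hx3 : x ^ 3 = n := rpow_one_div_three_pow n.cast_nonneg
  have hbK : (b : ℝ) * K ≤ a * x := by
    rw [← le_div_iff₀ (by linarith), hb]
    exact Nat.floor_le (by positivity)
  have hcube : ((b : ℝ) * K) ^ 3 ≤ 6 * (1 - 2 * ε) * n := by
    rw [← ha3, ← hx3, ← mul_pow]
    exact pow_le_pow_left₀ (by positivity) hbK 3
  have hlead := cubic_term_le hε2 hK1 hεK b.cast_nonneg hcube
  have hrest := lower_terms_le hK1 b.cast_nonneg hbK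
  have hsmall : (a * x) ^ 2 + a * x + 1 ≤ ε * n := hx3 ▸ hN n hn
  exact_mod_cast (by linarith : (K : ℝ) * (K + 1) * (K + 2) * b ^ 3
    + 3 * (K * (K + 1)) * b ^ 2 + 6 * (K * b) + 6 ≤ 6 * n)
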